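/- Let n ≥ 2, let λ be dominant for SU(n) (λ₁ ≥ ... ≥ λ_{n-1} ≥ λₙ = 0), and suppose nonnegative integers t₁,...,tₙ satisfy ∑ t_i = ∑_{i=1}^{n-1} λ_i, with p_i = t_i - tₙ. Then 1 + λ₁ ≥ (1/n²)(∑_{i=1}^{n-1}|p_i| + 1). -/

import Mathlib

open Finset

/-!
Let `L = λ₁` and `S = ∑_{i<n} λᵢ = ∑ tᵢ`. Dominance gives `0 ≤ L` and `S ≤ (n - 1) L`, while
`|tᵢ - tₙ| ≤ tᵢ + tₙ` and `tₙ ≤ S` give `∑_{i<n} |pᵢ| ≤ n S`. Hence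
`∑ |pᵢ| + 1 ≤ n (n - 1) L + 1 ≤ n² (1 + L)`.
-/

theorem Finset.sum_abs_sub_le_card_add_one_mul_sum {ι α : Type*} [Fintype ι]
    [Ring α] [LinearOrder α] [IsOrderedRing α] {t : ι → α} (ht : ∀ i, 0 ≤ t i)
    (s : Finset ι) (j : ι) :
    ∑ i ∈ s, |t i - t j| ≤ (#s + 1 : α) * ∑ i, t i := by
  have htj : t j ≤ ∑ i, t i := single_le_sum (fun i _ => ht i) (mem_univ j)
  have hts : ∑ i ∈ s, t i ≤ ∑ i, t i :=
    sum_le_sum_of_subset_of_nonneg (subset_univ s) fun i _ _ => ht i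
  calc ∑ i ∈ s, |t i - t j|
      ≤ ∑ i ∈ s, (t i + t j) := sum_le_sum fun i _ => by
        simpa only [abs_of_nonneg (ht i), abs_of_nonneg (ht j)] using abs_sub (t i) (t j)
    _ = ∑ i ∈ s, t i + #s * t j := by rw [sum_add_distrib, sum_const, nsmul_eq_mul]
    _ ≤ ∑ i, t i + #s * ∑ i, t i := by gcongr
    _ = (#s + 1 : α) * ∑ i, t i := by rw [add_one_mul, add_comm]

/-- Lower bound on the length `λ₁` of any `SU(n)` dominant weight whose
tableau content realizes the torus character `p`:
`1 + λ₁ ≥ (1/n²)(∑|pᵢ| + 1)`. -/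
theorem stmt_19 (n : ℕ) (hn : 2 ≤ n) (lam : Fin n → ℤ)
    (hmono : ∀ i j : Fin n, i ≤ j → lam j ≤ lam i)
    (hlast : lam ⟨n - 1, by omega⟩ = 0)
    (t : Fin n → ℤ) (ht : ∀ i, 0 ≤ t i)
    (hsum : ∑ i, t i = ∑ i ∈ univ.filter (fun i : Fin n => (i : ℕ) < n - 1), lam i)
    (p : Fin n → ℤ) (hpdef : ∀ i, p i = t i - t ⟨n - 1, by omega⟩) :
    ((1 : ℝ) + (lam ⟨0, by omega⟩ : ℝ)) ≥
      (1 / (n : ℝ) ^ 2) *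
        ((∑ i ∈ univ.filter (fun i : Fin n => (i : ℕ) < n - 1), |(p i : ℝ)|) + 1) := by
  set s : Finset (Fin n) := {i : Fin n | (i : ℕ) < n - 1}
  set L : ℤ := lam ⟨0, by omega⟩
  have hcard : #s = n - 1 := by
    rw [Fin.card_filter_val_lt]
    omega
  have hlamL : ∀ i, lam i ≤ L := fun i => hmono _ i (Nat.zero_le _)
  have hL : 0 ≤ (L : ℝ) := by exact_mod_cast hlast ▸ hlamL _
  have hS : ∑ i ∈ s, (lam i : ℝ) ≤ (n - 1 : ℝ) * L := by
    have := sum_le_card_nsmul s (fun i => (lam i : ℝ)) L fun i _ => by exact_mod_cast hlamL i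
    rwa [nsmul_eq_mul, hcard, Nat.cast_pred (by omega)] at this
  have hp : ∑ i ∈ s, |(p i : ℝ)| ≤ n * ∑ i ∈ s, (lam i : ℝ) := by
    have := sum_abs_sub_le_card_add_one_mul_sum (t := fun i => (t i : ℝ))
      (fun i => by exact_mod_cast ht i) s ⟨n - 1, by omega⟩
    simp only [hcard, Nat.cast_pred (by omega : 0 < n), sub_add_cancel] at this
    simpa only [hpdef, Int.cast_sub, ← Int.cast_sum, hsum] using this
  have hn2 : (0 : ℝ) < (n : ℝ) ^ 2 := by positivity
  rw [ge_iff_le, one_div, inv_mul_le_iff₀ hn2]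
  have hn1 : (1 : ℝ) ≤ n := by exact_mod_cast (by omega : 1 ≤ n)
  nlinarith
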